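/- arXiv:1802.05066 — 2 statements merged into one kernel-verified Lean document; each statement's English description precedes it below -/
import Mathlib

section
/- Let H satisfy the hypotheses of the negative-definiteness result (nonnegative, nonzero in L^1, etc.), let n ≥ 0, φ_n(x) = ∑_{k=0}^n x_k, and let t_n^H = q_n^H(v_n^H) where v_n^H is the unique vector with φ_n(v_n^H)=1 that is q_n^H-orthogonal to ker φ_n. Then the quadratic form t·φ_n² − q_n^H on ℝ^{n+1} is positive definite for t > t_n^H, degenerate for t = t_n^H, and has signature (n,1) for t < t_n^H. -/
/-!
On `ker φ_n` the term `H 0 * exp (-t) / t` of the integrand cancels, leaving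
`q_n^H x = -∫ H t / (1 - exp (-t)) * ∑ x_i x_j exp (-t) ^ |i - j| dt`. The Kac–Murdock–Szegő
matrix `(r ^ |i - j|)` is positive definite for `r ^ 2 < 1`, so `q_n^H` is negative definite on
`ker φ_n`. As `v_n^H` is `q_n^H`-orthogonal to `ker φ_n`, writing `x = φ_n x • v_n^H + y` with
`y ∈ ker φ_n` gives `t * φ_n x ^ 2 - q_n^H x = (t - t_n^H) * φ_n x ^ 2 - q_n^H y`, and the three
cases can be read off.
-/

open MeasureTheory Set Finset

/-- The real-valued function `ψ_H`. -/
noncomputable def psiH (H : ℝ → ℝ) (s : ℝ) : ℝ :=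
  ∫ t in Ioi (0 : ℝ),
    (H 0 * Real.exp (-t) / t - H t * Real.exp (-(s * t)) / (1 - Real.exp (-t)))

/-- The symmetric bilinear form attached to `q_n^H`. -/
noncomputable def bH (H : ℝ → ℝ) (n : ℕ) (x y : Fin (n + 1) → ℝ) : ℝ :=
  ∑ i, ∑ j, x i * y j * psiH H |(i.1 : ℝ) - (j.1 : ℝ)|

/-- The quadratic form `q_n^H`. -/
noncomputable def qH (H : ℝ → ℝ) (n : ℕ) (x : Fin (n + 1) → ℝ) : ℝ :=
  bH H n x x

open Real

section KacMurdockSzego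

variable {R : Type*} [CommRing R] {N : ℕ}

def kmsForm (r : R) (x : Fin N → R) : R := ∑ i, ∑ j, x i * x j * r ^ Nat.dist i j

def polyEval (r : R) (x : Fin N → R) : R := ∑ i, x i * r ^ (i : ℕ)

lemma polyEval_cons (r a : R) (x : Fin N → R) :
    polyEval r (Fin.cons a x : Fin (N + 1) → R) = a + r * polyEval r x := by
  simp only [polyEval, Fin.sum_univ_succ, Fin.cons_zero, Fin.cons_succ, Fin.val_zero,
    Fin.val_succ, pow_zero, mul_one, pow_succ, mul_sum]
  congr 1
  exact sum_congr rfl fun i _ => by ring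

lemma kmsForm_cons (r a : R) (x : Fin N → R) :
    kmsForm r (Fin.cons a x : Fin (N + 1) → R) =
      polyEval r (Fin.cons a x : Fin (N + 1) → R) ^ 2 - r ^ 2 * polyEval r x ^ 2 +
        kmsForm r x := by
  rw [polyEval_cons]
  simp only [kmsForm, polyEval, Fin.sum_univ_succ, Fin.cons_zero, Fin.cons_succ, Fin.val_zero,
    Fin.val_succ, Nat.dist_zero_left, Nat.dist_zero_right, Nat.dist_succ_succ, sum_add_distrib]
  have h1 : ∑ i : Fin N, a * x i * r ^ ((i : ℕ) + 1) = a * r * ∑ i, x i * r ^ (i : ℕ) := by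
    rw [mul_sum]; exact sum_congr rfl fun i _ => by ring
  have h2 : ∑ i : Fin N, x i * a * r ^ ((i : ℕ) + 1) = a * r * ∑ i, x i * r ^ (i : ℕ) := by
    rw [mul_sum]; exact sum_congr rfl fun i _ => by ring
  rw [h1, h2]
  ring

variable [LinearOrder R] [IsStrictOrderedRing R] {r : R}

-- By `kmsForm_cons`, prepending a coordinate increases `kmsForm r x - r ^ 2 * polyEval r x ^ 2`
-- by `(1 - r ^ 2) * polyEval r x ^ 2`, evaluated at the extended vector.
lemma sq_mul_polyEval_sq_lt_kmsForm (hr : r ^ 2 < 1) {x : Fin N → R} (hx : x ≠ 0) :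
    r ^ 2 * polyEval r x ^ 2 < kmsForm r x := by
  induction N with
  | zero => exact absurd (Subsingleton.elim x 0) hx
  | succ N ih =>
    rw [← Fin.cons_self_tail x, kmsForm_cons]
    by_cases htail : Fin.tail x = 0
    · have hx0 : x 0 ≠ 0 := fun h =>
        hx (by rw [← Fin.cons_self_tail x, h, htail]; exact Matrix.cons_zero_zero)
      have hP : polyEval r (Fin.tail x) = 0 := by simp [htail, polyEval]
      have hK : kmsForm r (Fin.tail x) = 0 := by simp [htail, kmsForm]
      rw [polyEval_cons, hP, hK]
      nlinarith [sq_pos_of_ne_zero hx0]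
    · nlinarith [ih htail, mul_nonneg (sub_nonneg.2 hr.le)
        (sq_nonneg (polyEval r (Fin.cons (x 0) (Fin.tail x) : Fin (N + 1) → R)))]

lemma kmsForm_pos (hr : r ^ 2 < 1) {x : Fin N → R} (hx : x ≠ 0) : 0 < kmsForm r x := by
  nlinarith [sq_mul_polyEval_sq_lt_kmsForm hr hx, sq_nonneg r, sq_nonneg (polyEval r x)]

end KacMurdockSzego

namespace LinearMap.BilinForm

variable {𝕜 E : Type*} [Field 𝕜] [LinearOrder 𝕜] [IsStrictOrderedRing 𝕜]
  [AddCommGroup E] [Module 𝕜 E] {B : LinearMap.BilinForm 𝕜 E} {φ : E →ₗ[𝕜] 𝕜} {v : E}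

lemma apply_eq_mul_of_forall_ker (hv1 : φ v = 1) (hv2 : ∀ y, φ y = 0 → B v y = 0) (y : E) :
    B v y = B v v * φ y := by
  have h := hv2 (y - φ y • v) (by simp [hv1])
  rw [map_sub, map_smul, smul_eq_mul] at h
  linear_combination h

lemma apply_self_eq_of_forall_ker (hB : B.IsSymm) (hv1 : φ v = 1)
    (hv2 : ∀ y, φ y = 0 → B v y = 0) (x : E) :
    B x x = φ x ^ 2 * B v v + B (x - φ x • v) (x - φ x • v) := by
  have hxv : B x v = B v v * φ x := by rw [← hB.eq, apply_eq_mul_of_forall_ker hv1 hv2]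
  simp only [map_sub, map_smul, LinearMap.sub_apply, LinearMap.smul_apply, smul_eq_mul, hxv,
    apply_eq_mul_of_forall_ker hv1 hv2 x]
  ring

lemma sub_apply_self_pos_of_lt (hB : B.IsSymm) (hv1 : φ v = 1) (hv2 : ∀ y, φ y = 0 → B v y = 0)
    (hneg : ∀ y, y ≠ 0 → φ y = 0 → B y y < 0) {t : 𝕜} (ht : B v v < t) {x : E} (hx : x ≠ 0) :
    0 < t * φ x ^ 2 - B x x := by
  rw [apply_self_eq_of_forall_ker hB hv1 hv2]
  by_cases hy : x - φ x • v = 0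
  · have hφx : φ x ≠ 0 := fun h => hx (by simpa [h] using hy)
    rw [hy, map_zero, add_zero]
    nlinarith [mul_pos (sub_pos.2 ht) (sq_pos_of_ne_zero hφx)]
  · nlinarith [hneg _ hy (by simp [hv1]), sq_nonneg (φ x)]

lemma exists_sub_apply_ne_zero_of_lt (hB : B.IsSymm) (hv1 : φ v = 1)
    (hv2 : ∀ y, φ y = 0 → B v y = 0) (hneg : ∀ y, y ≠ 0 → φ y = 0 → B y y < 0) {t : 𝕜}
    (ht : t < B v v) {x : E} (hx : x ≠ 0) : ∃ y, t * φ x * φ y - B x y ≠ 0 := by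
  by_cases hφx : φ x = 0
  · refine ⟨x, ?_⟩
    rw [hφx]
    simpa using (hneg x hx hφx).ne
  · refine ⟨v, ?_⟩
    rw [← hB.eq, apply_eq_mul_of_forall_ker hv1 hv2, hv1, mul_one, ← sub_mul]
    exact mul_ne_zero (sub_ne_zero.2 ht.ne) hφx

end LinearMap.BilinForm

noncomputable def psiIntegrand (H : ℝ → ℝ) (s t : ℝ) : ℝ :=
  H 0 * exp (-t) / t - H t * exp (-(s * t)) / (1 - exp (-t))

lemma abs_psiIntegrand_le_of_le_half {H : ℝ → ℝ} {s C t : ℝ} (hs : 0 ≤ s) (ht0 : 0 < t)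
    (ht : t ≤ 1 / 2) (hC : |H t - H 0| ≤ C * t) :
    |psiIntegrand H s t| ≤ 2 * (|H 0| * (2 + s) + C) := by
  set r := exp (-t) with hr_def
  set u := exp (-(s * t)) with hu_def
  have hr : |1 - r - t| ≤ t ^ 2 := by
    have := abs_exp_sub_one_sub_id_le (x := -t) (by rw [abs_neg, abs_of_pos ht0]; linarith)
    rw [neg_sq] at this
    rw [show 1 - r - t = -(r - 1 - -t) by ring, abs_neg]
    exact this
  have hr1 : r ≤ 1 := exp_le_one_iff.2 (by linarith)
  have hr0 : 0 < r := exp_pos _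
  have hu1 : u ≤ 1 := exp_le_one_iff.2 (by nlinarith)
  have hu0 : 0 < u := exp_pos _
  have hu : 1 - u ≤ s * t := by linarith [add_one_le_exp (-(s * t))]
  have hD : t / 2 ≤ 1 - r := by nlinarith [(abs_le.1 hr).1]
  have hD0 : 0 < 1 - r := by linarith
  have hr' : 1 - r ≤ t := by linarith [add_one_le_exp (-t)]
  have hC0 : 0 ≤ C := nonneg_of_mul_nonneg_left ((abs_nonneg _).trans hC) ht0
  have hF : psiIntegrand H s t =
      (H 0 * (r * ((1 - r) - t) + t * (r - u)) + (H 0 - H t) * u * t) / (t * (1 - r)) := by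
    rw [psiIntegrand, ← hr_def, ← hu_def]
    field_simp
    ring
  have h1 : |r * ((1 - r) - t) + t * (r - u)| ≤ t ^ 2 * (2 + s) := by
    have hru : |r - u| ≤ t * (1 + s) := abs_le.2 ⟨by nlinarith, by nlinarith⟩
    calc |r * ((1 - r) - t) + t * (r - u)| ≤ r * |(1 - r) - t| + t * |r - u| := by
          refine (abs_add_le _ _).trans ?_
          rw [abs_mul, abs_mul, abs_of_pos hr0, abs_of_pos ht0]
      _ ≤ 1 * t ^ 2 + t * (t * (1 + s)) := by gcongr
      _ ≤ t ^ 2 * (2 + s) := by nlinarith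
  have h2 : |(H 0 - H t) * u * t| ≤ C * t * t := by
    rw [abs_mul, abs_mul, abs_of_pos hu0, abs_of_pos ht0, abs_sub_comm]
    calc |H t - H 0| * u * t ≤ |H t - H 0| * 1 * t := by gcongr
      _ ≤ C * t * t := by rw [mul_one]; gcongr
  rw [hF, abs_div, abs_of_pos (mul_pos ht0 hD0), div_le_iff₀ (mul_pos ht0 hD0)]
  calc |H 0 * (r * ((1 - r) - t) + t * (r - u)) + (H 0 - H t) * u * t|
      ≤ |H 0| * (t ^ 2 * (2 + s)) + C * t * t := by
        refine (abs_add_le _ _).trans (add_le_add ?_ h2)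
        rw [abs_mul]; gcongr
    _ ≤ 2 * (|H 0| * (2 + s) + C) * (t * (1 - r)) := by
        have hK : 0 ≤ |H 0| * (2 + s) + C := by positivity
        nlinarith [mul_le_mul_of_nonneg_left hD (mul_nonneg hK ht0.le)]

lemma abs_psiIntegrand_le_of_ge {H : ℝ → ℝ} {s δ t : ℝ} (hs : 0 ≤ s) (hδ : 0 < δ) (ht : δ ≤ t) :
    |psiIntegrand H s t| ≤ |H 0| / δ * exp (-t) + |H t| / (1 - exp (-δ)) := by
  have ht0 : 0 < t := hδ.trans_le ht
  have hDδ : 0 < 1 - exp (-δ) := by linarith [exp_lt_one_iff.2 (neg_lt_zero.2 hδ)]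
  have hD : 1 - exp (-δ) ≤ 1 - exp (-t) := by gcongr
  have hu : exp (-(s * t)) ≤ 1 := exp_le_one_iff.2 (by nlinarith)
  refine (abs_sub _ _).trans (add_le_add ?_ ?_)
  · rw [abs_div, abs_mul, abs_of_pos (exp_pos _), abs_of_pos ht0, mul_div_right_comm]
    gcongr
  · rw [abs_div, abs_mul, abs_of_pos (exp_pos _), abs_of_pos (hDδ.trans_le hD)]
    calc |H t| * exp (-(s * t)) / (1 - exp (-t)) ≤ |H t| * 1 / (1 - exp (-δ)) := by gcongr
      _ = |H t| / (1 - exp (-δ)) := by rw [mul_one]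

lemma aestronglyMeasurable_psiIntegrand {H : ℝ → ℝ} {μ : Measure ℝ}
    (hH : AEStronglyMeasurable H μ) (s : ℝ) : AEStronglyMeasurable (psiIntegrand H s) μ := by
  have hdiv : Measurable fun t : ℝ => exp (-(s * t)) / (1 - exp (-t)) := by fun_prop
  have hpsi : psiIntegrand H s =
      fun t => H 0 * exp (-t) / t - H t * (exp (-(s * t)) / (1 - exp (-t))) := by
    ext t; rw [psiIntegrand, mul_div_assoc (H t)]
  rw [hpsi]
  exact (by fun_prop : Measurable fun t : ℝ => H 0 * exp (-t) / t).aestronglyMeasurable.sub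
    (hH.mul hdiv.aestronglyMeasurable)

lemma integrableOn_psiIntegrand {H : ℝ → ℝ} (hInt : IntegrableOn H (Ici 0))
    (hbd : ∃ ε > (0 : ℝ), ∃ C : ℝ, ∀ t ∈ Ioo (0 : ℝ) ε, |(H t - H 0) / t| ≤ C)
    {s : ℝ} (hs : 0 ≤ s) : IntegrableOn (psiIntegrand H s) (Ioi 0) := by
  obtain ⟨ε, hε, C, hC⟩ := hbd
  set δ := min (ε / 2) (1 / 2)
  have hδ : 0 < δ := lt_min (by linarith) (by norm_num)
  have hδε : δ < ε := (min_le_left _ _).trans_lt (by linarith)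
  have hmeas : AEStronglyMeasurable (psiIntegrand H s) (volume.restrict (Ioi 0)) :=
    aestronglyMeasurable_psiIntegrand
      (hInt.mono_set Ioi_subset_Ici_self).aestronglyMeasurable s
  rw [← Ioc_union_Ioi_eq_Ioi hδ.le]
  refine IntegrableOn.union ?_ ?_
  · refine Integrable.mono' (integrableOn_const (C := 2 * (|H 0| * (2 + s) + C))
      measure_Ioc_lt_top.ne) (hmeas.mono_set Ioc_subset_Ioi_self) ?_
    filter_upwards [ae_restrict_mem measurableSet_Ioc] with t ⟨ht0, htδ⟩
    have hCt : |H t - H 0| ≤ C * t := by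
      have := hC t ⟨ht0, htδ.trans_lt hδε⟩
      rwa [abs_div, abs_of_pos ht0, div_le_iff₀ ht0] at this
    exact abs_psiIntegrand_le_of_le_half hs ht0 (htδ.trans (min_le_right _ _)) hCt
  · refine Integrable.mono' (((integrableOn_exp_neg_Ioi δ).const_mul (|H 0| / δ)).add
      ((hInt.mono_set (Ioi_subset_Ici hδ.le)).abs.div_const (1 - exp (-δ))))
      (hmeas.mono_set (Ioi_subset_Ioi hδ.le)) ?_
    filter_upwards [ae_restrict_mem measurableSet_Ioi] with t ht
    exact abs_psiIntegrand_le_of_ge hs hδ ht.le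

lemma cast_dist_eq_abs_sub (i j : ℕ) : (Nat.dist i j : ℝ) = |(i : ℝ) - j| := by
  rcases le_total i j with h | h
  · rw [Nat.dist_eq_sub_of_le h, Nat.cast_sub h, abs_sub_comm, abs_of_nonneg (by simpa using h)]
  · rw [Nat.dist_eq_sub_of_le_right h, Nat.cast_sub h, abs_of_nonneg (by simpa using h)]

lemma sum_mul_psiIntegrand_eq (H : ℝ → ℝ) {N : ℕ} {x : Fin N → ℝ} (hx : ∑ i, x i = 0) (t : ℝ) :
    ∑ i, ∑ j, x i * x j * psiIntegrand H |(i : ℝ) - j| t =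
      -(H t / (1 - exp (-t)) * kmsForm (exp (-t)) x) := by
  have hterm : ∀ i j : Fin N, psiIntegrand H |(i : ℝ) - j| t =
      H 0 * exp (-t) / t - H t / (1 - exp (-t)) * exp (-t) ^ Nat.dist i j := by
    intro i j
    rw [psiIntegrand, ← cast_dist_eq_abs_sub, ← exp_nat_mul, mul_neg, mul_div_right_comm (H t)]
  simp_rw [hterm, mul_sub, sum_sub_distrib, ← sum_mul, ← mul_sum, hx, mul_zero, sum_const_zero,
    zero_mul, zero_sub, kmsForm, mul_sum]
  exact congrArg Neg.neg (sum_congr rfl fun i _ => sum_congr rfl fun j _ => by ring)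

lemma bH_eq_integral {H : ℝ → ℝ} (hInt : IntegrableOn H (Ici 0))
    (hbd : ∃ ε > (0 : ℝ), ∃ C : ℝ, ∀ t ∈ Ioo (0 : ℝ) ε, |(H t - H 0) / t| ≤ C)
    {n : ℕ} (x y : Fin (n + 1) → ℝ) :
    bH H n x y = ∫ t in Ioi 0, ∑ i, ∑ j, x i * y j * psiIntegrand H |(i : ℝ) - j| t := by
  have hint : ∀ i j : Fin (n + 1),
      IntegrableOn (fun t => x i * y j * psiIntegrand H |(i : ℝ) - j| t) (Ioi 0) :=
    fun i j => (integrableOn_psiIntegrand hInt hbd (abs_nonneg _)).const_mul _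
  rw [integral_finsetSum _ fun i _ => integrable_finsetSum _ fun j _ => hint i j]
  refine sum_congr rfl fun i _ => ?_
  rw [integral_finsetSum _ fun j _ => hint i j]
  exact sum_congr rfl fun j _ => (integral_const_mul _ _).symm

lemma bH_self_neg {H : ℝ → ℝ} (hInt : IntegrableOn H (Ici 0)) (hpos : ∀ t, 0 ≤ t → 0 ≤ H t)
    (hne : ¬ (∀ᵐ t ∂(volume.restrict (Ioi (0 : ℝ))), H t = 0))
    (hbd : ∃ ε > (0 : ℝ), ∃ C : ℝ, ∀ t ∈ Ioo (0 : ℝ) ε, |(H t - H 0) / t| ≤ C)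
    {n : ℕ} {x : Fin (n + 1) → ℝ} (hx0 : x ≠ 0) (hx : ∑ i, x i = 0) : bH H n x x < 0 := by
  set g : ℝ → ℝ := fun t => H t / (1 - exp (-t)) * kmsForm (exp (-t)) x
  have hfactor : ∀ t ∈ Ioi (0 : ℝ), 0 < 1 - exp (-t) ∧ 0 < kmsForm (exp (-t)) x := by
    intro t ht
    have hr : exp (-t) < 1 := exp_lt_one_iff.2 (neg_lt_zero.2 ht)
    exact ⟨sub_pos.2 hr, kmsForm_pos (pow_lt_one₀ (exp_pos _).le hr two_ne_zero) hx0⟩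
  have hg_int : IntegrableOn g (Ioi 0) := by
    have h : IntegrableOn (fun t => ∑ i, ∑ j, x i * x j * psiIntegrand H |(i : ℝ) - j| t)
        (Ioi 0) := integrable_finsetSum _ fun i _ => integrable_finsetSum _ fun j _ =>
      (integrableOn_psiIntegrand hInt hbd (abs_nonneg _)).const_mul _
    simp only [sum_mul_psiIntegrand_eq H hx] at h
    simpa using h.neg
  have hg_nonneg : 0 ≤ᵐ[volume.restrict (Ioi 0)] g :=
    ae_restrict_of_forall_mem measurableSet_Ioi fun t ht =>
      mul_nonneg (div_nonneg (hpos t (le_of_lt ht)) (hfactor t ht).1.le) (hfactor t ht).2.le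
  have hg_pos : 0 < ∫ t in Ioi 0, g t := by
    refine (integral_nonneg_of_ae hg_nonneg).lt_of_ne fun h => hne ?_
    filter_upwards [(integral_eq_zero_iff_of_nonneg_ae hg_nonneg hg_int).1 h.symm,
      ae_restrict_mem measurableSet_Ioi] with t hgt ht
    simpa [g, (hfactor t ht).1.ne', (hfactor t ht).2.ne'] using hgt
  rw [bH_eq_integral hInt hbd, funext (sum_mul_psiIntegrand_eq H hx), integral_neg]
  linarith

noncomputable def psiBilinForm (H : ℝ → ℝ) (n : ℕ) : LinearMap.BilinForm ℝ (Fin (n + 1) → ℝ) :=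
  Matrix.toBilin' (Matrix.of fun i j : Fin (n + 1) => psiH H |(i : ℝ) - j|)

lemma psiBilinForm_apply (H : ℝ → ℝ) (n : ℕ) (x y : Fin (n + 1) → ℝ) :
    psiBilinForm H n x y = bH H n x y := by
  rw [psiBilinForm, Matrix.toBilin'_apply, bH]
  exact sum_congr rfl fun i _ => sum_congr rfl fun j _ => by rw [Matrix.of_apply]; ring

lemma isSymm_psiBilinForm (H : ℝ → ℝ) (n : ℕ) : (psiBilinForm H n).IsSymm :=
  Matrix.isSymm_toBilin'_iff_isSymm.2 (Matrix.IsSymm.ext fun i j => by simp [abs_sub_comm])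

open LinearMap.BilinForm in
theorem stmt_9 (H : ℝ → ℝ)
    (hInt : IntegrableOn H (Ici 0))
    (hpos : ∀ t, 0 ≤ t → 0 ≤ H t)
    (hne : ¬ (∀ᵐ t ∂(volume.restrict (Ioi (0 : ℝ))), H t = 0))
    (hbd : ∃ ε > (0 : ℝ), ∃ C : ℝ, ∀ t ∈ Ioo (0 : ℝ) ε, |(H t - H 0) / t| ≤ C)
    (n : ℕ) (v : Fin (n + 1) → ℝ)
    (hv1 : ∑ i, v i = 1)
    (hv2 : ∀ y : Fin (n + 1) → ℝ, ∑ i, y i = 0 → bH H n v y = 0) :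
    -- `t > t_n^H` : positive definite
    (∀ t : ℝ, qH H n v < t → ∀ x : Fin (n + 1) → ℝ, x ≠ 0 →
        0 < t * (∑ i, x i) ^ 2 - qH H n x) ∧
    -- `t = t_n^H` : degenerate
    (∃ x : Fin (n + 1) → ℝ, x ≠ 0 ∧ ∀ y : Fin (n + 1) → ℝ,
        qH H n v * (∑ i, x i) * (∑ i, y i) - bH H n x y = 0) ∧
    -- `t < t_n^H` : signature (n, 1)
    (∀ t : ℝ, t < qH H n v →
        (∃ x : Fin (n + 1) → ℝ, t * (∑ i, x i) ^ 2 - qH H n x < 0) ∧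
        (∀ x : Fin (n + 1) → ℝ, x ≠ 0 → ∑ i, x i = 0 →
            0 < t * (∑ i, x i) ^ 2 - qH H n x) ∧
        (∀ x : Fin (n + 1) → ℝ, x ≠ 0 → ∃ y : Fin (n + 1) → ℝ,
            t * (∑ i, x i) * (∑ i, y i) - bH H n x y ≠ 0)) := by
  set B := psiBilinForm H n
  set φ : (Fin (n + 1) → ℝ) →ₗ[ℝ] ℝ := ∑ i, LinearMap.proj i
  have hφ : ∀ x, φ x = ∑ i, x i := fun x => by simp [φ]
  have hB : ∀ x y, B x y = bH H n x y := psiBilinForm_apply H n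
  have hBs : B.IsSymm := isSymm_psiBilinForm H n
  have hv1' : φ v = 1 := by rw [hφ, hv1]
  have hv2' : ∀ y, φ y = 0 → B v y = 0 := fun y hy => by
    rw [hB]; exact hv2 y (by rwa [← hφ])
  have hneg : ∀ x, x ≠ 0 → φ x = 0 → B x x < 0 := fun x hx0 hx => by
    rw [hB]; exact bH_self_neg hInt hpos hne hbd hx0 (by rwa [← hφ])
  simp only [qH, ← hφ, ← hB]
  refine ⟨fun t ht x hx => sub_apply_self_pos_of_lt hBs hv1' hv2' hneg ht hx,
    ⟨v, fun h => by simp [h] at hv1', fun y => ?_⟩,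
    fun t ht => ⟨⟨v, ?_⟩, fun x hx0 hx => ?_,
      fun x hx => exists_sub_apply_ne_zero_of_lt hBs hv1' hv2' hneg ht hx⟩⟩
  · rw [hv1', mul_one, apply_eq_mul_of_forall_ker hv1' hv2' y, sub_self]
  · rw [hv1']; linarith
  · rw [hx]; linarith [hneg x hx0 hx]
end

section
/- With notation as above, for every n ≥ 0 one has (ψ_H(0) + ψ_H(n))/2 ≤ t_n^H ≤ t_{n+1}^H. -/
/-!
On the hyperplane `∑ xᵢ = 1` the form `q_n^H` is maximised at its critical point, because the
difference of two points of the hyperplane sums to zero and `q_n^H` is negative semidefinite on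
sum-zero vectors. For the latter, write `ψ_H(|i - j|)` as an integral over `t > 0`: the term
`H(0) e^{-t} / t` does not depend on `(i, j)` and cancels against a sum-zero vector, leaving
`-H(t) / (1 - e^{-t})` times the kernel `e^{-t|i - j|}`, which is positive semidefinite (it is the
covariance of an AR(1) sequence). Evaluating `q_n^H` at `(e_0 + e_n) / 2` gives the lower bound;
extending the critical vector by a zero entry gives the upper bound.
-/

open MeasureTheory Set Finset

open Real

theorem one_sub_exp_neg_pos {t : ℝ} (ht : 0 < t) : 0 < 1 - exp (-t) :=
  sub_pos.mpr (exp_lt_one_iff.mpr (neg_neg_of_pos ht))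

theorem mul_exp_neg_le_one_sub_exp_neg (t : ℝ) : t * exp (-t) ≤ 1 - exp (-t) := by
  have h := mul_le_mul_of_nonneg_right (add_one_le_exp t) (exp_pos (-t)).le
  rw [← exp_add, add_neg_cancel, exp_zero] at h
  linarith

theorem exp_neg_div_one_sub_exp_neg_le {t : ℝ} (ht : 0 < t) :
    exp (-t) / (1 - exp (-t)) ≤ 1 / t := by
  rw [div_le_div_iff₀ (one_sub_exp_neg_pos ht) ht]
  linarith [mul_exp_neg_le_one_sub_exp_neg t]

theorem abs_exp_neg_div_sub_exp_neg_div_le {t : ℝ} (ht : 0 < t) :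
    |exp (-t) / t - exp (-t) / (1 - exp (-t))| ≤ exp (-t) := by
  have hD := one_sub_exp_neg_pos ht
  have hDt : 1 - exp (-t) ≤ t := by linarith [one_sub_le_exp_neg t]
  have hle : exp (-t) / t ≤ exp (-t) / (1 - exp (-t)) :=
    div_le_div_of_nonneg_left (exp_pos _).le hD hDt
  rw [abs_sub_comm, abs_of_nonneg (sub_nonneg.mpr hle), div_sub_div _ _ hD.ne' ht.ne',
    div_le_iff₀ (mul_pos hD ht)]
  nlinarith [mul_exp_neg_le_one_sub_exp_neg t, exp_pos (-t)]

theorem abs_exp_neg_sub_exp_neg_mul_le {s t : ℝ} (hs : 0 ≤ s) (ht : 0 ≤ t) :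
    |exp (-t) - exp (-(s * t))| ≤ (1 + s) * (1 - exp (-t)) := by
  have hDt : 0 ≤ 1 - exp (-t) := sub_nonneg.mpr (exp_le_one_iff.mpr (neg_nonpos.mpr ht))
  rcases le_total s 1 with h1 | h1
  · have hst : exp (-t) ≤ exp (-(s * t)) := exp_le_exp.mpr (by nlinarith)
    have : exp (-(s * t)) ≤ 1 := exp_le_one_iff.mpr (by nlinarith)
    rw [abs_of_nonpos (sub_nonpos.mpr hst)]
    nlinarith
  · have hst : exp (-(s * t)) ≤ exp (-t) := exp_le_exp.mpr (by nlinarith)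
    have hsplit : exp (-t) - exp (-(s * t)) = exp (-t) * (1 - exp (-((s - 1) * t))) := by
      rw [mul_sub, mul_one, ← exp_add]; ring_nf
    have h2 : 1 - exp (-((s - 1) * t)) ≤ (s - 1) * t := by
      linarith [one_sub_le_exp_neg ((s - 1) * t)]
    rw [abs_of_nonneg (sub_nonneg.mpr hst), hsplit]
    nlinarith [mul_exp_neg_le_one_sub_exp_neg t, exp_pos (-t)]

noncomputable def psiHIntegrand (H : ℝ → ℝ) (s t : ℝ) : ℝ :=
  H 0 * exp (-t) / t - H t * exp (-(s * t)) / (1 - exp (-t))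

theorem psiH_eq_integral (H : ℝ → ℝ) (s : ℝ) :
    psiH H s = ∫ t in Ioi 0, psiHIntegrand H s t :=
  rfl

theorem abs_psiHIntegrand_le_of_pos {H : ℝ → ℝ} {s t C : ℝ} (hs : 0 ≤ s) (ht : 0 < t)
    (hC : |(H t - H 0) / t| ≤ C) : |psiHIntegrand H s t| ≤ |H 0| + C + (1 + s) * |H t| := by
  have hD := one_sub_exp_neg_pos ht
  -- Both terms of the integrand are of order `1 / t` at `0`; each of these three summands is
  -- bounded.
  have hsplit : psiHIntegrand H s t = H 0 * (exp (-t) / t - exp (-t) / (1 - exp (-t)))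
      + (H 0 - H t) * (exp (-t) / (1 - exp (-t)))
      + H t * ((exp (-t) - exp (-(s * t))) / (1 - exp (-t))) := by
    rw [psiHIntegrand]; ring
  have h1 : |H 0 * (exp (-t) / t - exp (-t) / (1 - exp (-t)))| ≤ |H 0| := by
    rw [abs_mul]
    have := abs_exp_neg_div_sub_exp_neg_div_le ht
    have := exp_le_one_iff.mpr (neg_nonpos.mpr ht.le)
    nlinarith [abs_nonneg (H 0)]
  have h2 : |(H 0 - H t) * (exp (-t) / (1 - exp (-t)))| ≤ C := by
    have hHt : |H 0 - H t| ≤ C * t := by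
      rwa [abs_div, abs_of_pos ht, div_le_iff₀ ht, abs_sub_comm] at hC
    rw [abs_mul, abs_of_nonneg (div_nonneg (exp_pos _).le hD.le)]
    calc |H 0 - H t| * (exp (-t) / (1 - exp (-t))) ≤ (C * t) * (1 / t) :=
          mul_le_mul hHt (exp_neg_div_one_sub_exp_neg_le ht) (div_nonneg (exp_pos _).le hD.le)
            ((abs_nonneg _).trans hHt)
      _ = C := by field_simp
  have h3 : |H t * ((exp (-t) - exp (-(s * t))) / (1 - exp (-t)))| ≤ (1 + s) * |H t| := by
    rw [abs_mul, abs_div, abs_of_pos hD, mul_comm]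
    gcongr
    rw [div_le_iff₀ hD]
    exact abs_exp_neg_sub_exp_neg_mul_le hs ht.le
  rw [hsplit]
  exact (abs_add_le _ _).trans (add_le_add ((abs_add_le _ _).trans (add_le_add h1 h2)) h3)

theorem abs_psiHIntegrand_le_of_le {H : ℝ → ℝ} {s t ε : ℝ} (hs : 0 ≤ s) (hε : 0 < ε)
    (ht : ε ≤ t) :
    |psiHIntegrand H s t| ≤ |H 0| / ε * exp (-t) + |H t| / (1 - exp (-ε)) := by
  have ht0 : 0 < t := hε.trans_le ht
  have hDε := one_sub_exp_neg_pos hε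
  have hDt : 1 - exp (-ε) ≤ 1 - exp (-t) := by gcongr
  have h1 : |H 0 * exp (-t) / t| ≤ |H 0| / ε * exp (-t) := by
    rw [abs_div, abs_mul, abs_of_pos (exp_pos _), abs_of_pos ht0, div_mul_eq_mul_div]
    gcongr
  have h2 : |H t * exp (-(s * t)) / (1 - exp (-t))| ≤ |H t| / (1 - exp (-ε)) := by
    rw [abs_div, abs_mul, abs_of_pos (exp_pos _), abs_of_pos (hDε.trans_le hDt)]
    have : exp (-(s * t)) ≤ 1 := exp_le_one_iff.mpr (by nlinarith)
    gcongr
    nlinarith [abs_nonneg (H t)]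
  exact (abs_sub _ _).trans (add_le_add h1 h2)

theorem integrableOn_psiHIntegrand {H : ℝ → ℝ} (hInt : IntegrableOn H (Ici 0))
    (hbd : ∃ ε > (0 : ℝ), ∃ C : ℝ, ∀ t ∈ Ioo (0 : ℝ) ε, |(H t - H 0) / t| ≤ C)
    {s : ℝ} (hs : 0 ≤ s) : IntegrableOn (psiHIntegrand H s) (Ioi 0) := by
  obtain ⟨ε, hε, C, hC⟩ := hbd
  have hH : IntegrableOn H (Ioi 0) := hInt.mono_set Ioi_subset_Ici_self
  have hmeas : AEStronglyMeasurable (psiHIntegrand H s) (volume.restrict (Ioi 0)) := by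
    have := hH.aestronglyMeasurable.aemeasurable
    unfold psiHIntegrand
    exact AEMeasurable.aestronglyMeasurable (by fun_prop)
  rw [← Ioo_union_Ici_eq_Ioi hε, integrableOn_union]
  constructor
  · refine Integrable.mono' (g := fun t => |H 0| + C + (1 + s) * |H t|) ?_
      (hmeas.mono_set Set.Ioo_subset_Ioi_self) ?_
    · exact ((integrableOn_const measure_Ioo_lt_top.ne).add
        ((hH.mono_set Set.Ioo_subset_Ioi_self).abs.const_mul _))
    · exact ae_restrict_of_forall_mem measurableSet_Ioo fun t ht =>
        abs_psiHIntegrand_le_of_pos hs ht.1 (hC t ht)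
  · refine Integrable.mono' (g := fun t => |H 0| / ε * exp (-t) + |H t| / (1 - exp (-ε))) ?_
      (hmeas.mono_set (Ici_subset_Ioi.mpr hε)) ?_
    · exact (((integrableOn_exp_neg_Ioi 0).mono_set (Ici_subset_Ioi.mpr hε)).const_mul _).add
        ((hH.mono_set (Ici_subset_Ioi.mpr hε)).abs.div_const _)
    · exact ae_restrict_of_forall_mem measurableSet_Ici fun t ht =>
        abs_psiHIntegrand_le_of_le hs hε ht

theorem sq_le_sum_sum_mul_pow_dist {r : ℝ} (hr : r ^ 2 ≤ 1) :
    ∀ (m : ℕ) (y : Fin m → ℝ),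
      (∑ i, y i * r ^ (m - i : ℕ)) ^ 2 ≤ ∑ i, ∑ j, y i * y j * r ^ Nat.dist i j
  | 0, y => by simp
  | m + 1, y => by
    -- Passing from `m` to `m + 1` adds `2 y_m S + y_m²` to the form and turns `S` into
    -- `r (S + y_m)`, whose square is at most `(S + y_m)²`.
    set S := ∑ i : Fin m, y i.castSucc * r ^ (m - i : ℕ)
    have hS : ∑ i : Fin (m + 1), y i * r ^ (m + 1 - i : ℕ) = r * (S + y (Fin.last m)) := by
      rw [Fin.sum_univ_castSucc, mul_add, Finset.mul_sum]
      congr 1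
      · refine Finset.sum_congr rfl fun i _ => ?_
        rw [Fin.val_castSucc, Nat.sub_add_comm i.is_le', pow_succ]
        ring
      · simp [mul_comm]
    have hdist : ∀ i : Fin m, Nat.dist i m = m - i := fun i => Nat.dist_eq_sub_of_le i.is_le'
    have hQ : ∑ i : Fin (m + 1), ∑ j : Fin (m + 1), y i * y j * r ^ Nat.dist i j
        = (∑ i : Fin m, ∑ j : Fin m, y i.castSucc * y j.castSucc * r ^ Nat.dist i j)
          + 2 * (y (Fin.last m) * S) + y (Fin.last m) ^ 2 := by
      simp only [Fin.sum_univ_castSucc, Fin.val_castSucc, Fin.val_last, Finset.sum_add_distrib,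
        hdist, Nat.dist_comm m, Nat.dist_self, S]
      have hcross : ∑ i : Fin m, y (Fin.last m) * y i.castSucc * r ^ (m - i : ℕ)
          + ∑ i : Fin m, y i.castSucc * y (Fin.last m) * r ^ (m - i : ℕ)
          = 2 * (y (Fin.last m) * S) := by
        simp only [S, Finset.mul_sum, ← Finset.sum_add_distrib]
        exact Finset.sum_congr rfl fun _ _ => by ring
      linear_combination hcross
    rw [hS, hQ]
    have ih := sq_le_sum_sum_mul_pow_dist hr m (fun i => y i.castSucc)
    nlinarith [sq_nonneg (S + y (Fin.last m))]

theorem abs_natCast_sub_natCast (i j : ℕ) : |(i : ℝ) - j| = Nat.dist i j := by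
  rcases le_total i j with h | h
  · rw [Nat.dist_eq_sub_of_le h, abs_sub_comm, Nat.cast_sub h,
      abs_of_nonneg (sub_nonneg.mpr (Nat.cast_le.mpr h))]
  · rw [Nat.dist_eq_sub_of_le_right h, Nat.cast_sub h,
      abs_of_nonneg (sub_nonneg.mpr (Nat.cast_le.mpr h))]

theorem psiHIntegrand_abs_sub (H : ℝ → ℝ) (i j : ℕ) (t : ℝ) :
    psiHIntegrand H |(i : ℝ) - j| t
      = H 0 * exp (-t) / t - H t / (1 - exp (-t)) * exp (-t) ^ Nat.dist i j := by
  rw [psiHIntegrand, abs_natCast_sub_natCast, ← exp_nat_mul, mul_neg]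
  ring

theorem qH_nonpos_of_sum_eq_zero {H : ℝ → ℝ} (hInt : IntegrableOn H (Ici 0))
    (hpos : ∀ t, 0 ≤ t → 0 ≤ H t)
    (hbd : ∃ ε > (0 : ℝ), ∃ C : ℝ, ∀ t ∈ Ioo (0 : ℝ) ε, |(H t - H 0) / t| ≤ C)
    (m : ℕ) {y : Fin (m + 1) → ℝ} (hy : ∑ i, y i = 0) : qH H m y ≤ 0 := by
  have hI : ∀ i j : Fin (m + 1), IntegrableOn
      (fun t => y i * y j * psiHIntegrand H |(i : ℝ) - j| t) (Ioi 0) := fun i j =>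
    (integrableOn_psiHIntegrand hInt hbd (abs_nonneg _)).const_mul _
  have hpt : ∀ t ∈ Ioi (0 : ℝ),
      ∑ i, ∑ j, y i * y j * psiHIntegrand H |(i : ℝ) - j| t ≤ 0 := by
    intro t (ht : 0 < t)
    have hr : exp (-t) ^ 2 ≤ 1 :=
      pow_le_one₀ (exp_pos _).le (exp_le_one_iff.mpr (neg_nonpos.mpr ht.le))
    have hK := (sq_nonneg _).trans (sq_le_sum_sum_mul_pow_dist hr (m + 1) y)
    have hHD : 0 ≤ H t / (1 - exp (-t)) := div_nonneg (hpos t ht.le) (one_sub_exp_neg_pos ht).le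
    have hconst : ∑ i, ∑ j, y i * y j * (H 0 * exp (-t) / t) = 0 := by
      simp only [← Finset.sum_mul, ← Finset.mul_sum, hy, zero_mul, mul_zero,
        Finset.sum_const_zero]
    have hkernel : ∑ i, ∑ j, y i * y j * (H t / (1 - exp (-t)) * exp (-t) ^ Nat.dist i j)
        = H t / (1 - exp (-t)) * ∑ i, ∑ j, y i * y j * exp (-t) ^ Nat.dist i j := by
      simp only [Finset.mul_sum]
      exact Finset.sum_congr rfl fun i _ => Finset.sum_congr rfl fun j _ => by ring
    simp only [psiHIntegrand_abs_sub, mul_sub, Finset.sum_sub_distrib, hconst, hkernel, zero_sub,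
      neg_nonpos]
    exact mul_nonneg hHD hK
  calc qH H m y = ∫ t in Ioi 0, ∑ i, ∑ j, y i * y j * psiHIntegrand H |(i : ℝ) - j| t := by
        simp only [qH, bH, psiH_eq_integral, ← integral_const_mul]
        rw [integral_finsetSum _ fun i _ => integrable_finsetSum _ fun j _ => hI i j]
        exact Finset.sum_congr rfl fun i _ => (integral_finsetSum _ fun j _ => hI i j).symm
    _ ≤ 0 := setIntegral_nonpos measurableSet_Ioi hpt

theorem LinearMap.BilinForm.IsSymm.apply_add_le {R M : Type*} [CommSemiring R] [PartialOrder R]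
    [IsOrderedAddMonoid R] [AddCommMonoid M] [Module R M] {B : LinearMap.BilinForm R M}
    (hB : B.IsSymm) {v k : M} (hk : B v k = 0) (hkk : B k k ≤ 0) :
    B (v + k) (v + k) ≤ B v v := by
  simp only [map_add, LinearMap.add_apply, hk, hB.eq k v, add_zero, zero_add]
  exact add_le_of_nonpos_right hkk

noncomputable def psiMatrix (H : ℝ → ℝ) (n : ℕ) : Matrix (Fin (n + 1)) (Fin (n + 1)) ℝ :=
  Matrix.of fun i j => psiH H |(i : ℝ) - j|

theorem bH_eq_toBilin' (H : ℝ → ℝ) (n : ℕ) (x y : Fin (n + 1) → ℝ) :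
    bH H n x y = (psiMatrix H n).toBilin' x y := by
  simp only [bH, Matrix.toBilin'_apply, psiMatrix, Matrix.of_apply, mul_right_comm]

theorem isSymm_toBilin'_psiMatrix (H : ℝ → ℝ) (n : ℕ) :
    (psiMatrix H n).toBilin'.IsSymm := by
  refine Matrix.isSymm_toBilin'_iff_isSymm.mpr (Matrix.IsSymm.ext fun i j => ?_)
  simp only [psiMatrix, Matrix.of_apply, abs_sub_comm]

theorem qH_le_of_critical {H : ℝ → ℝ} {n : ℕ}
    (hQ : ∀ y : Fin (n + 1) → ℝ, ∑ i, y i = 0 → qH H n y ≤ 0)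
    {v z : Fin (n + 1) → ℝ}
    (hv1 : ∑ i, v i = 1)
    (hv2 : ∀ y : Fin (n + 1) → ℝ, ∑ i, y i = 0 → bH H n v y = 0)
    (hz : ∑ i, z i = 1) : qH H n z ≤ qH H n v := by
  have hsum : ∑ i, (z - v) i = 0 := by simp [Finset.sum_sub_distrib, hz, hv1]
  have hmax := (isSymm_toBilin'_psiMatrix H n).apply_add_le (v := v) (k := z - v)
    (by rw [← bH_eq_toBilin']; exact hv2 _ hsum)
    (by rw [← bH_eq_toBilin']; exact hQ _ hsum)
  rwa [add_sub_cancel, ← bH_eq_toBilin', ← bH_eq_toBilin'] at hmax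

theorem qH_midpoint_single (H : ℝ → ℝ) (n : ℕ) :
    qH H n ((1 / 2 : ℝ) • (Pi.single 0 1 + Pi.single (Fin.last n) 1))
      = (psiH H 0 + psiH H n) / 2 := by
  simp only [qH, one_div, smul_add, bH_eq_toBilin', psiMatrix, map_add, map_smul,
    LinearMap.add_apply, LinearMap.smul_apply, Matrix.toBilin'_single, Matrix.of_apply,
    Fin.coe_ofNat_eq_mod, Nat.zero_mod, CharP.cast_eq_zero, sub_self, abs_zero, smul_eq_mul,
    Fin.val_last, zero_sub, abs_neg, Nat.abs_cast, sub_zero]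
  ring

theorem sum_midpoint_single (n : ℕ) :
    ∑ i, ((1 / 2 : ℝ) • (Pi.single 0 1 + Pi.single (Fin.last n) 1) : Fin (n + 1) → ℝ) i
      = 1 := by
  norm_num [Finset.sum_add_distrib, ← Finset.mul_sum]

theorem qH_snoc_zero (H : ℝ → ℝ) (n : ℕ) (v : Fin (n + 1) → ℝ) :
    qH H (n + 1) (Fin.snoc v 0) = qH H n v := by
  simp [qH, bH, Fin.sum_univ_castSucc]

theorem stmt_10_general (H : ℝ → ℝ)
    (hInt : IntegrableOn H (Ici 0))
    (hpos : ∀ t, 0 ≤ t → 0 ≤ H t)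
    (hbd : ∃ ε > (0 : ℝ), ∃ C : ℝ, ∀ t ∈ Ioo (0 : ℝ) ε, |(H t - H 0) / t| ≤ C)
    (n : ℕ) (v : Fin (n + 1) → ℝ) (v' : Fin (n + 2) → ℝ)
    (hv1 : ∑ i, v i = 1)
    (hv2 : ∀ y : Fin (n + 1) → ℝ, ∑ i, y i = 0 → bH H n v y = 0)
    (hv'1 : ∑ i, v' i = 1)
    (hv'2 : ∀ y : Fin (n + 2) → ℝ, ∑ i, y i = 0 → bH H (n + 1) v' y = 0) :
    (psiH H 0 + psiH H n) / 2 ≤ qH H n v ∧ qH H n v ≤ qH H (n + 1) v' := by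
  have hQ : ∀ m (y : Fin (m + 1) → ℝ), ∑ i, y i = 0 → qH H m y ≤ 0 :=
    fun m _ hy => qH_nonpos_of_sum_eq_zero hInt hpos hbd m hy
  constructor
  · rw [← qH_midpoint_single]
    exact qH_le_of_critical (hQ n) hv1 hv2 (sum_midpoint_single n)
  · rw [← qH_snoc_zero H n v]
    exact qH_le_of_critical (hQ (n + 1)) hv'1 hv'2 (by simp [Fin.sum_snoc, hv1])

theorem stmt_10 (H : ℝ → ℝ)
    (hInt : IntegrableOn H (Ici 0))
    (hpos : ∀ t, 0 ≤ t → 0 ≤ H t)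
    (hne : ¬ (∀ᵐ t ∂(volume.restrict (Ioi (0 : ℝ))), H t = 0))
    (hbd : ∃ ε > (0 : ℝ), ∃ C : ℝ, ∀ t ∈ Ioo (0 : ℝ) ε, |(H t - H 0) / t| ≤ C)
    (n : ℕ) (v : Fin (n + 1) → ℝ) (v' : Fin (n + 2) → ℝ)
    (hv1 : ∑ i, v i = 1)
    (hv2 : ∀ y : Fin (n + 1) → ℝ, ∑ i, y i = 0 → bH H n v y = 0)
    (hv'1 : ∑ i, v' i = 1)
    (hv'2 : ∀ y : Fin (n + 2) → ℝ, ∑ i, y i = 0 → bH H (n + 1) v' y = 0) :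
    (psiH H 0 + psiH H n) / 2 ≤ qH H n v ∧ qH H n v ≤ qH H (n + 1) v' :=
  stmt_10_general H hInt hpos hbd n v v' hv1 hv2 hv'1 hv'2
end
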